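/- For every p, v > 0 and every k ≥ 1, the function K_k = √(g_p) · H_k^{[p]} is an eigenfunction of Λ*Λ with eigenvalue (p/(p+v))^k, where Λ : L²(dx) → L²(dx) is the operator ΛK = ((√(g_p) K) ⋆ g_v)/√(g_{p+v}) and Λ* its adjoint. That is, Λ*Λ K_k = (p/(p+v))^k K_k. -/

import Mathlib

/-! Gaussian smoothing `f ↦ ∫ f(t) g_s(t - m) dt` with `0 < s < P` sends `H_k^{[P]}` to
`((P - s)/P)^{k/2} H_k^{[P-s]}(m)`: by Stein's identity `∫ (t - m) f g_s(t - m) = s ∫ f' g_s(t - m)`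
both sides satisfy the three-term Hermite recurrence, with the same first two terms. Completing the
square, `g_p(t) g_v(x - t) = g_{p+v}(x) g_{pv/(p+v)}(t - px/(p+v))`, so `Λ K_k` is such a smoothing
and equals `(p/(p+v))^{k/2} √g_{p+v} H_k^{[p+v]}`; in the same way `Λ*` sends this function back to
`(p/(p+v))^{k/2} K_k`. -/

open MeasureTheory Real

/-- Probabilists' Hermite polynomial `H_k(x) = (-1)^k e^{x²/2} (d^k/dx^k) e^{-x²/2}`. -/
noncomputable def hermiteH (k : ℕ) (x : ℝ) : ℝ :=
  (-1 : ℝ) ^ k * Real.exp (x ^ 2 / 2) *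
    iteratedDeriv k (fun y : ℝ => Real.exp (-(y ^ 2) / 2)) x

/-- Centered Gaussian density of variance `p`. -/
noncomputable def gauss (p : ℝ) (x : ℝ) : ℝ :=
  (Real.sqrt (2 * Real.pi * p))⁻¹ * Real.exp (-(x ^ 2) / (2 * p))

/-- Normalized Hermite polynomial adapted to variance `p`:
`H_k^{[p]}(x) = H_k(x/√p)/√(k!)`. -/
noncomputable def hermiteN (p : ℝ) (k : ℕ) (x : ℝ) : ℝ :=
  (Real.sqrt (Nat.factorial k))⁻¹ * hermiteH k (x / Real.sqrt p)

/-- The channel perturbation operator `Λ K = ((√g_p K) ⋆ g_v)/√g_{p+v}` on `L²(dx)`. -/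
noncomputable def lamOp (p v : ℝ) (K : ℝ → ℝ) (x : ℝ) : ℝ :=
  (∫ t, Real.sqrt (gauss p t) * K t * gauss v (x - t)) / Real.sqrt (gauss (p + v) x)

/-- Its adjoint `Λ* M (t) = √g_p(t) · ((M/√g_{p+v}) ⋆ g_v)(t)`. -/
noncomputable def lamOpStar (p v : ℝ) (M : ℝ → ℝ) (t : ℝ) : ℝ :=
  Real.sqrt (gauss p t) * ∫ x, M x / Real.sqrt (gauss (p + v) x) * gauss v (x - t)

open Polynomial

namespace Polynomial

theorem derivative_hermite_succ (n : ℕ) :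
    derivative (hermite (n + 1)) = ((n : ℤ[X]) + 1) * hermite n := by
  induction n with
  | zero => simp [hermite_zero]
  | succ n ih =>
    rw [hermite_succ (n + 1), derivative_sub, derivative_mul, derivative_X, ih, derivative_mul,
      hermite_succ n]
    simp only [derivative_add, derivative_natCast, derivative_one, Nat.cast_add, Nat.cast_one]
    ring

theorem hermite_succ_succ (n : ℕ) :
    hermite (n + 2) = X * hermite (n + 1) - ((n : ℤ[X]) + 1) * hermite n := by
  rw [hermite_succ (n + 1), derivative_hermite_succ]

end Polynomial

theorem hermiteH_eq_aeval (k : ℕ) (x : ℝ) : hermiteH k x = aeval x (hermite k) := by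
  simp only [hermiteH, hermite_eq_deriv_gaussian', iteratedDeriv_eq_iterate, neg_div]
  ring

theorem hermiteH_zero (x : ℝ) : hermiteH 0 x = 1 := by
  simp [hermiteH_eq_aeval]

theorem hermiteH_one (x : ℝ) : hermiteH 1 x = x := by
  simp [hermiteH_eq_aeval]

theorem hermiteH_succ_succ (k : ℕ) (x : ℝ) :
    hermiteH (k + 2) x = x * hermiteH (k + 1) x - (k + 1) * hermiteH k x := by
  rw [hermiteH_eq_aeval, hermite_succ_succ]
  simp [hermiteH_eq_aeval]

theorem hasDerivAt_hermiteH_succ (k : ℕ) (x : ℝ) :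
    HasDerivAt (hermiteH (k + 1)) ((k + 1) * hermiteH k x) x := by
  rw [show hermiteH (k + 1) = fun y => aeval y (hermite (k + 1)) from
    funext (hermiteH_eq_aeval _), hermiteH_eq_aeval]
  refine ((hermite (k + 1)).hasDerivAt_aeval x).congr_deriv ?_
  rw [derivative_hermite_succ]
  simp

theorem hermiteH_div_eq_eval (k : ℕ) (σ t : ℝ) :
    hermiteH k (t / σ) = (((hermite k).map (Int.castRingHom ℝ)).comp (C σ⁻¹ * X)).eval t := by
  simp [hermiteH_eq_aeval, aeval_def, eval_map, div_eq_inv_mul]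

theorem gauss_pos {s : ℝ} (hs : 0 < s) (x : ℝ) : 0 < gauss s x := by
  unfold gauss
  have : 0 < √(2 * π * s) := sqrt_pos.mpr (by positivity)
  positivity

theorem gauss_eq_mul_exp (s x : ℝ) :
    gauss s x = (√(2 * π * s))⁻¹ * exp (-(2 * s)⁻¹ * x ^ 2) := by
  rw [gauss]
  congr 2
  ring

theorem integral_gauss {s : ℝ} (hs : 0 < s) : ∫ x, gauss s x = 1 := by
  simp_rw [gauss_eq_mul_exp]
  rw [integral_const_mul, integral_gaussian, ← sqrt_inv, ← sqrt_mul (by positivity)]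
  field_simp
  simp

theorem hasDerivAt_gauss (s x : ℝ) : HasDerivAt (gauss s) (-(x / s) * gauss s x) x := by
  have h := ((hasDerivAt_pow 2 x).const_mul (-(2 * s)⁻¹)).exp.const_mul (√(2 * π * s))⁻¹
  rw [show gauss s = _ from funext (gauss_eq_mul_exp s)]
  refine h.congr_deriv ?_
  ring

theorem integrable_eval_mul_gauss (P : ℝ[X]) {s : ℝ} (hs : 0 < s) :
    Integrable fun u => P.eval u * gauss s u := by
  induction P using Polynomial.induction_on' with
  | add P Q hP hQ =>
    simp only [eval_add, add_mul]
    exact hP.add hQ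
  | monomial n c =>
    have h := (integrable_rpow_mul_exp_neg_mul_sq (b := (2 * s)⁻¹) (by positivity)
      (s := n) (by linarith [(n.cast_nonneg : (0 : ℝ) ≤ n)])).const_mul (c * (√(2 * π * s))⁻¹)
    simp only [rpow_natCast] at h
    convert h using 2 with u
    rw [eval_monomial, gauss_eq_mul_exp]
    ring

theorem integrable_eval_mul_gauss_sub (P : ℝ[X]) {s : ℝ} (hs : 0 < s) (m : ℝ) :
    Integrable fun t => P.eval t * gauss s (t - m) := by
  convert (integrable_eval_mul_gauss (P.comp (X + C m)) hs).comp_sub_right m using 3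
  simp

theorem integral_sub_mul_mul_gauss_sub {s m : ℝ} (hs : s ≠ 0) {f f' : ℝ → ℝ}
    (hf : ∀ t, HasDerivAt f (f' t) t) (hfg : Integrable fun t => f t * gauss s (t - m))
    (hf'g : Integrable fun t => f' t * gauss s (t - m))
    (hxfg : Integrable fun t => (t - m) * f t * gauss s (t - m)) :
    ∫ t, (t - m) * f t * gauss s (t - m) = s * ∫ t, f' t * gauss s (t - m) := by
  have hderiv (t : ℝ) : HasDerivAt (fun t => f t * gauss s (t - m))
      (f' t * gauss s (t - m) - s⁻¹ * ((t - m) * f t * gauss s (t - m))) t := by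
    refine ((hf t).mul ((hasDerivAt_gauss s (t - m)).comp_sub_const t m)).congr_deriv ?_
    ring
  have h := integral_eq_zero_of_hasDerivAt_of_integrable hderiv
    (hf'g.sub (hxfg.const_mul s⁻¹)) hfg
  rw [integral_sub hf'g (hxfg.const_mul s⁻¹), integral_const_mul, sub_eq_zero] at h
  rw [h, mul_inv_cancel_left₀ hs]

theorem integral_mul_gauss_sub {s : ℝ} (hs : 0 < s) (m : ℝ) : ∫ t, t * gauss s (t - m) = m := by
  have hint : Integrable fun t => gauss s (t - m) := by
    simpa using integrable_eval_mul_gauss_sub (1 : ℝ[X]) hs m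
  have hint' : Integrable fun t => (t - m) * gauss s (t - m) := by
    have h := integrable_eval_mul_gauss_sub (X - C m) hs m
    simp only [eval_sub, eval_X, eval_C] at h
    exact h
  have hmean : ∫ t, (t - m) * gauss s (t - m) = 0 := by
    simpa using integral_sub_mul_mul_gauss_sub (m := m) hs.ne' (fun t => hasDerivAt_const t 1)
      (by simpa using hint) (by simp) (by simpa using hint')
  calc ∫ t, t * gauss s (t - m) = ∫ t, ((t - m) * gauss s (t - m) + m * gauss s (t - m)) := by
        congr 1 with t; ring
    _ = m := by
      rw [integral_add hint' (hint.const_mul m), hmean, integral_const_mul,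
        integral_sub_right_eq_self (gauss s) m, integral_gauss hs]
      ring

theorem integrable_hermiteH_div_mul_gauss_sub (k : ℕ) (σ : ℝ) {s : ℝ} (hs : 0 < s) (m : ℝ) :
    Integrable fun t => hermiteH k (t / σ) * gauss s (t - m) := by
  simpa only [hermiteH_div_eq_eval] using integrable_eval_mul_gauss_sub _ hs m

theorem integrable_sub_mul_hermiteH_div_mul_gauss_sub (k : ℕ) (σ : ℝ) {s : ℝ} (hs : 0 < s)
    (m : ℝ) : Integrable fun t => (t - m) * hermiteH k (t / σ) * gauss s (t - m) := by
  have h := integrable_eval_mul_gauss_sub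
    ((X - C m) * ((hermite k).map (Int.castRingHom ℝ)).comp (C σ⁻¹ * X)) hs m
  simp only [eval_mul, eval_sub, eval_X, eval_C, ← hermiteH_div_eq_eval] at h
  exact h

theorem integral_hermiteH_succ_succ_div_mul_gauss_sub (k : ℕ) (σ : ℝ) {s : ℝ} (hs : 0 < s)
    (m : ℝ) :
    ∫ t, hermiteH (k + 2) (t / σ) * gauss s (t - m) =
      m / σ * (∫ t, hermiteH (k + 1) (t / σ) * gauss s (t - m)) -
        (1 - s / σ ^ 2) * (k + 1) * ∫ t, hermiteH k (t / σ) * gauss s (t - m) := by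
  have hH₀ := integrable_hermiteH_div_mul_gauss_sub k σ hs m
  have hH₁ := integrable_hermiteH_div_mul_gauss_sub (k + 1) σ hs m
  have hxH₁ := integrable_sub_mul_hermiteH_div_mul_gauss_sub (k + 1) σ hs m
  have stein : ∫ t, (t - m) * hermiteH (k + 1) (t / σ) * gauss s (t - m) =
      s * ∫ t, σ⁻¹ * ((k + 1) * hermiteH k (t / σ)) * gauss s (t - m) :=
    integral_sub_mul_mul_gauss_sub hs.ne'
      (fun t => by
        have h := (hasDerivAt_hermiteH_succ k (t / σ)).comp t ((hasDerivAt_id' t).div_const σ)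
        exact h.congr_deriv (by ring))
      hH₁ (by simpa [mul_assoc] using hH₀.const_mul (σ⁻¹ * (k + 1))) hxH₁
  calc ∫ t, hermiteH (k + 2) (t / σ) * gauss s (t - m)
      = ∫ t, (σ⁻¹ * ((t - m) * hermiteH (k + 1) (t / σ) * gauss s (t - m)) +
          m / σ * (hermiteH (k + 1) (t / σ) * gauss s (t - m)) -
          (k + 1) * (hermiteH k (t / σ) * gauss s (t - m))) := by
        congr 1 with t; rw [hermiteH_succ_succ]; ring
    _ = _ := by
      rw [integral_sub ((hxH₁.const_mul _).fun_add (hH₁.const_mul _)) (hH₀.const_mul _),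
        integral_add (hxH₁.const_mul _) (hH₁.const_mul _), integral_const_mul, integral_const_mul,
        integral_const_mul, stein]
      simp only [mul_assoc, integral_const_mul]
      ring

theorem integral_hermiteH_div_mul_gauss_sub {σ s : ℝ} (hs : 0 < s) (hsσ : s < σ ^ 2) (m : ℝ)
    (k : ℕ) :
    ∫ t, hermiteH k (t / σ) * gauss s (t - m) =
      (√(σ ^ 2 - s) / σ) ^ k * hermiteH k (m / √(σ ^ 2 - s)) := by
  have hσ : σ ≠ 0 := by rintro rfl; simp at hsσ; linarith
  have hτ : 0 < √(σ ^ 2 - s) := sqrt_pos.mpr (by linarith)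
  have hr : 1 - s / σ ^ 2 = (√(σ ^ 2 - s) / σ) ^ 2 := by
    rw [div_pow, sq_sqrt (by linarith)]
    field_simp
  induction k using Nat.twoStepInduction with
  | zero => simp [hermiteH_zero, integral_sub_right_eq_self (gauss s) m, integral_gauss hs]
  | one =>
    simp only [hermiteH_one, div_mul_eq_mul_div, integral_div, integral_mul_gauss_sub hs]
    field_simp
  | more k ih₀ ih₁ =>
    rw [integral_hermiteH_succ_succ_div_mul_gauss_sub k σ hs, ih₀, ih₁, hermiteH_succ_succ]
    have hm : m / σ = √(σ ^ 2 - s) / σ * (m / √(σ ^ 2 - s)) := by field_simp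
    rw [hr, hm]
    ring

theorem integral_hermiteN_mul_gauss_sub {P s : ℝ} (hs : 0 < s) (hsP : s < P) (m : ℝ) (k : ℕ) :
    ∫ t, hermiteN P k t * gauss s (t - m) = √((P - s) / P) ^ k * hermiteN (P - s) k m := by
  have hP : 0 ≤ P := by linarith
  simp only [hermiteN, mul_assoc, integral_const_mul]
  rw [integral_hermiteH_div_mul_gauss_sub hs (by rwa [sq_sqrt hP]) m k, sq_sqrt hP,
    sqrt_div' _ hP]
  ring

theorem hermiteN_sq_mul_mul {c : ℝ} (hc : 0 < c) (P : ℝ) (k : ℕ) (x : ℝ) :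
    hermiteN (c ^ 2 * P) k (c * x) = hermiteN P k x := by
  rw [hermiteN, hermiteN, sqrt_mul (sq_nonneg c), sqrt_sq hc.le, mul_div_mul_left _ _ hc.ne']

theorem gauss_mul_gauss_sub {p v : ℝ} (hp : 0 < p) (hv : 0 < v) (x t : ℝ) :
    gauss p t * gauss v (x - t)
      = gauss (p + v) x * gauss (p * v / (p + v)) (t - p * x / (p + v)) := by
  have hpv : 0 < p + v := by positivity
  have hconst : √(2 * π * p) * √(2 * π * v)
      = √(2 * π * (p + v)) * √(2 * π * (p * v / (p + v))) := by
    rw [← sqrt_mul (by positivity), ← sqrt_mul (by positivity)]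
    congr 1
    field_simp
  have hexp : -t ^ 2 / (2 * p) + -(x - t) ^ 2 / (2 * v)
      = -x ^ 2 / (2 * (p + v)) + -(t - p * x / (p + v)) ^ 2 / (2 * (p * v / (p + v))) := by
    field_simp
    ring
  simp only [gauss]
  rw [mul_mul_mul_comm, ← mul_inv, ← exp_add, hconst, hexp, exp_add, mul_inv]
  ring

theorem lamOp_sqrt_gauss_mul_hermiteN {p v : ℝ} (hp : 0 < p) (hv : 0 < v) (k : ℕ) (x : ℝ) :
    lamOp p v (fun t => √(gauss p t) * hermiteN p k t) x =
      √(p / (p + v)) ^ k * (√(gauss (p + v) x) * hermiteN (p + v) k x) := by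
  have hpv : 0 < p + v := by positivity
  have hq : p * v / (p + v) < p := by
    rw [div_lt_iff₀ hpv]; nlinarith
  have hvar : p - p * v / (p + v) = (p / (p + v)) ^ 2 * (p + v) := by field_simp; ring
  have hratio : (p - p * v / (p + v)) / p = p / (p + v) := by field_simp; ring
  have hmean : p * x / (p + v) = p / (p + v) * x := by ring
  have hintegrand (t : ℝ) : √(gauss p t) * (√(gauss p t) * hermiteN p k t) * gauss v (x - t) =
      gauss (p + v) x * (hermiteN p k t * gauss (p * v / (p + v)) (t - p * x / (p + v))) := by
    rw [← mul_assoc, mul_self_sqrt (gauss_pos hp t).le, mul_right_comm, gauss_mul_gauss_sub hp hv]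
    ring
  rw [lamOp, funext hintegrand, integral_const_mul,
    integral_hermiteN_mul_gauss_sub (by positivity) hq, hratio, hvar, hmean,
    hermiteN_sq_mul_mul (by positivity), mul_div_right_comm, div_sqrt]
  ring

theorem lamOpStar_sqrt_gauss_mul_hermiteN {p v : ℝ} (hp : 0 < p) (hv : 0 < v) (k : ℕ) (t : ℝ) :
    lamOpStar p v (fun x => √(gauss (p + v) x) * hermiteN (p + v) k x) t =
      √(p / (p + v)) ^ k * (√(gauss p t) * hermiteN p k t) := by
  have hintegrand (x : ℝ) : √(gauss (p + v) x) * hermiteN (p + v) k x / √(gauss (p + v) x) *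
      gauss v (x - t) = hermiteN (p + v) k x * gauss v (x - t) := by
    rw [mul_div_cancel_left₀ _ (sqrt_pos.mpr (gauss_pos (by positivity) x)).ne']
  rw [lamOpStar, funext hintegrand, integral_hermiteN_mul_gauss_sub hv (by linarith),
    add_sub_cancel_right]
  ring

theorem lamOpStar_const_mul (p v c : ℝ) (M : ℝ → ℝ) (t : ℝ) :
    lamOpStar p v (fun x => c * M x) t = c * lamOpStar p v M t := by
  simp only [lamOpStar, mul_div_assoc, mul_assoc, integral_const_mul]
  ring

theorem hermite_fun_eigen_general (p v : ℝ) (hp : 0 < p) (hv : 0 < v) (k : ℕ)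
    (x : ℝ) :
    lamOpStar p v (lamOp p v (fun t => Real.sqrt (gauss p t) * hermiteN p k t)) x =
      (p / (p + v)) ^ k * (Real.sqrt (gauss p x) * hermiteN p k x) := by
  rw [funext (lamOp_sqrt_gauss_mul_hermiteN hp hv k), lamOpStar_const_mul,
    lamOpStar_sqrt_gauss_mul_hermiteN hp hv, ← mul_assoc, ← mul_pow,
    mul_self_sqrt (by positivity)]

/-- `K_k = √g_p · H_k^{[p]}` is an eigenfunction of `Λ*Λ` with eigenvalue `(p/(p+v))^k`. -/
theorem hermite_fun_eigen (p v : ℝ) (hp : 0 < p) (hv : 0 < v) (k : ℕ) (hk : 1 ≤ k)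
    (x : ℝ) :
    lamOpStar p v (lamOp p v (fun t => Real.sqrt (gauss p t) * hermiteN p k t)) x =
      (p / (p + v)) ^ k * (Real.sqrt (gauss p x) * hermiteN p k x) :=
  hermite_fun_eigen_general p v hp hv k x
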